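/- arXiv:2103.15770 — 3 statements merged into one kernel-verified Lean document; each statement's English description precedes it below -/
import Mathlib

section
/- Let B be analytic with B(0) > 0, define ψ(Y) = Y·B'(Y)/B(Y), φ(Y) = Y·(1−ψ(Y))/(1+ψ(Y)) and x̂(Y) = Y/(B(Y)·(1+ψ(Y))²). Then wherever defined and x̂'(Y) ≠ 0, the ratio φ'(Y)/x̂'(Y) equals B(Y) + Y·B'(Y). -/
/-- the ratio φ'(Y)/x̂'(Y) equals B(Y) + Y·B'(Y). -/
theorem stmt3 (B : ℂ → ℂ) (hB : ∀ z, AnalyticAt ℂ B z)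
    (hB0re : 0 < (B 0).re) (hB0im : (B 0).im = 0) (Y : ℂ)
    (hBY : B Y ≠ 0) (hden : B Y + Y * deriv B Y ≠ 0)
    (hx' : deriv (fun Z => Z * B Z / (B Z + Z * deriv B Z) ^ 2) Y ≠ 0) :
    deriv (fun Z => Z * (B Z - Z * deriv B Z) / (B Z + Z * deriv B Z)) Y /
      deriv (fun Z => Z * B Z / (B Z + Z * deriv B Z) ^ 2) Y
      = B Y + Y * deriv B Y := by
  set b := B Y with hb
  set b' := deriv B Y with hb'
  set b'' := deriv (deriv B) Y with hb''
  have hB1 : HasDerivAt B b' Y := ((hB Y).differentiableAt).hasDerivAt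
  have hB2 : HasDerivAt (deriv B) b'' Y := (((AnalyticOnNhd.deriv (fun z _ => hB z) : AnalyticOnNhd ℂ (deriv B) Set.univ) Y (Set.mem_univ Y)).differentiableAt).hasDerivAt
  have hid : HasDerivAt (fun Z : ℂ => Z) 1 Y := hasDerivAt_id Y
  have hD : HasDerivAt (fun Z => B Z + Z * deriv B Z) (b' + (1 * b' + Y * b'')) Y :=
    hB1.add (hid.mul hB2)
  have hN : HasDerivAt (fun Z => Z * (B Z - Z * deriv B Z))
      (1 * (b - Y * b') + Y * (b' - (1 * b' + Y * b''))) Y :=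
    hid.mul (hB1.sub (hid.mul hB2))
  have hM : HasDerivAt (fun Z => Z * B Z) (1 * b + Y * b') Y := hid.mul hB1
  have hφ : HasDerivAt (fun Z => Z * (B Z - Z * deriv B Z) / (B Z + Z * deriv B Z))
      (((1 * (b - Y * b') + Y * (b' - (1 * b' + Y * b''))) * (b + Y * b')
        - Y * (b - Y * b') * (b' + (1 * b' + Y * b''))) / (b + Y * b') ^ 2) Y :=
    hN.div hD hden
  have hD2 : HasDerivAt (fun Z => (B Z + Z * deriv B Z) ^ 2)
      (2 * (b + Y * b') ^ 1 * (b' + (1 * b' + Y * b''))) Y := hD.pow 2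
  have hx : HasDerivAt (fun Z => Z * B Z / (B Z + Z * deriv B Z) ^ 2)
      (((1 * b + Y * b') * (b + Y * b') ^ 2
        - Y * b * (2 * (b + Y * b') ^ 1 * (b' + (1 * b' + Y * b'')))) / ((b + Y * b') ^ 2) ^ 2) Y :=
    hM.div hD2 (pow_ne_zero 2 hden)
  rw [hφ.deriv, hx.deriv]
  rw [hx.deriv] at hx'
  rw [div_eq_iff hx']
  field_simp
  ring
end

section
/- With the notation Q(Y,y) = (φ(Y)+y)² − 4y·B(y)·x̂(Y) as above, the second diagonal derivatives satisfy ∂_Y² Q(Y,Y) = 2φ'(Y) and ∂_y ∂_Y Q(Y,Y) = −2φ'(Y), at every Y with B(Y)+Y·B'(Y) ≠ 0. -/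
/-!
Write `N(Y) = Y·B(Y)`, so that `D := N' = B + Y·B'` is the common denominator. Then
`φ = 2N/D - Y` and `x̂ = N/D²`, which gives `φ' = 1 - 2ND'/D²` and the key identity
`x̂' = φ'/D`.
Hence `∂_Y Q(Y, y) = 2φ'(Y)·g(Y, y)` with `g(Y, y) = 2(N(Y) - N(y))/D(Y) - (Y - y)`.
On the diagonal `g` vanishes, `∂_Y g = 1` and `∂_y g = -1`, and the product rule finishes.
-/

open Filter Topology

namespace DiagonalDiscriminant

variable {𝕜 : Type*} [NontriviallyNormedField 𝕜] (N : 𝕜 → 𝕜)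

noncomputable def phi (Z : 𝕜) : 𝕜 := 2 * N Z / deriv N Z - Z

noncomputable def xhat (Z : 𝕜) : 𝕜 := N Z / deriv N Z ^ 2

noncomputable def discr (Z y : 𝕜) : 𝕜 := (phi N Z + y) ^ 2 - 4 * N y * xhat N Z

noncomputable def gap (Z y : 𝕜) : 𝕜 := 2 * (N Z - N y) / deriv N Z - (Z - y)

variable {N} {z : 𝕜}

lemma hasDerivAt_phi (hN : DifferentiableAt 𝕜 N z) (hN' : DifferentiableAt 𝕜 (deriv N) z)
    (hD : deriv N z ≠ 0) :
    HasDerivAt (phi N) (1 - 2 * N z * deriv (deriv N) z / deriv N z ^ 2) z :=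
  (((hN.hasDerivAt.const_mul 2).div hN'.hasDerivAt hD).sub (hasDerivAt_id z)).congr_deriv
    (by field_simp; ring)

lemma hasDerivAt_xhat (hN : DifferentiableAt 𝕜 N z) (hN' : DifferentiableAt 𝕜 (deriv N) z)
    (hD : deriv N z ≠ 0) :
    HasDerivAt (xhat N) (deriv (phi N) z / deriv N z) z := by
  rw [(hasDerivAt_phi hN hN' hD).deriv]
  exact (hN.hasDerivAt.div (hN'.hasDerivAt.fun_pow 2) (pow_ne_zero 2 hD)).congr_deriv
    (by field_simp; ring)

lemma deriv_discr_fst (y : 𝕜) (hN : DifferentiableAt 𝕜 N z)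
    (hN' : DifferentiableAt 𝕜 (deriv N) z) (hD : deriv N z ≠ 0) :
    deriv (fun w => discr N w y) z = 2 * deriv (phi N) z * gap N z y := by
  have hφ := hasDerivAt_phi hN hN' hD
  have hQ : HasDerivAt (fun w => discr N w y) _ z :=
    ((hφ.add_const y).fun_pow 2).sub ((hasDerivAt_xhat hN hN' hD).const_mul (4 * N y))
  rw [hQ.deriv, hφ.deriv]
  simp only [phi, gap, Nat.cast_ofNat, Nat.add_one_sub_one, pow_one]
  field_simp
  ring

lemma gap_self (y : 𝕜) : gap N y y = 0 := by
  simp [gap]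

lemma hasDerivAt_gap_fst_diag (hN : DifferentiableAt 𝕜 N z)
    (hN' : DifferentiableAt 𝕜 (deriv N) z) (hD : deriv N z ≠ 0) :
    HasDerivAt (fun w => gap N w z) 1 z :=
  ((((hN.hasDerivAt.sub_const (N z)).const_mul 2).div hN'.hasDerivAt hD).sub
    ((hasDerivAt_id z).sub_const z)).congr_deriv (by field_simp; ring)

lemma hasDerivAt_gap_snd_diag (hN : DifferentiableAt 𝕜 N z) (hD : deriv N z ≠ 0) :
    HasDerivAt (gap N z) (-1) z :=
  ((((hN.hasDerivAt.const_sub (N z)).const_mul 2).div_const (deriv N z)).sub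
    ((hasDerivAt_id z).const_sub z)).congr_deriv (by field_simp; ring)

lemma deriv_deriv_discr_fst_diag [CompleteSpace 𝕜] (hN : AnalyticAt 𝕜 N z)
    (hD : deriv N z ≠ 0) :
    deriv (deriv fun w => discr N w z) z = 2 * deriv (phi N) z := by
  have hnear : ∀ᶠ w in 𝓝 z, AnalyticAt 𝕜 N w ∧ deriv N w ≠ 0 :=
    hN.eventually_analyticAt.and (hN.deriv.continuousAt.eventually_ne hD)
  have hpartial :
      deriv (fun w => discr N w z) =ᶠ[𝓝 z] fun w => 2 * deriv (phi N) w * gap N w z :=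
    hnear.mono fun w ⟨hNw, hDw⟩ =>
      deriv_discr_fst z hNw.differentiableAt hNw.deriv.differentiableAt hDw
  have hφ : AnalyticAt 𝕜 (phi N) z :=
    ((analyticAt_const.mul hN).div hN.deriv hD).sub analyticAt_id
  have hprod : HasDerivAt (fun w => 2 * deriv (phi N) w * gap N w z) _ z :=
    (hφ.deriv.differentiableAt.hasDerivAt.const_mul 2).mul
      (hasDerivAt_gap_fst_diag hN.differentiableAt hN.deriv.differentiableAt hD)
  rw [hpartial.deriv_eq, hprod.deriv, gap_self]
  ring

lemma deriv_deriv_discr_snd_diag (hN : DifferentiableAt 𝕜 N z)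
    (hN' : DifferentiableAt 𝕜 (deriv N) z) (hD : deriv N z ≠ 0) :
    deriv (fun y => deriv (fun w => discr N w y) z) z = -2 * deriv (phi N) z := by
  have hpartial : (fun y => deriv (fun w => discr N w y) z) =
      fun y => 2 * deriv (phi N) z * gap N z y :=
    funext fun y => deriv_discr_fst y hN hN' hD
  rw [hpartial, ((hasDerivAt_gap_snd_diag hN hD).const_mul _).deriv]
  ring

lemma deriv_id_mul {B : 𝕜 → 𝕜} (hB : Differentiable 𝕜 B) :
    deriv (fun z => z * B z) = fun z => B z + z * deriv B z :=
  funext fun z => ((hasDerivAt_id z).mul (hB z).hasDerivAt).deriv.trans (by simp)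

lemma phi_id_mul {B : 𝕜 → 𝕜} (hB : Differentiable 𝕜 B) (hz : B z + z * deriv B z ≠ 0) :
    phi (fun z => z * B z) z = z * (B z - z * deriv B z) / (B z + z * deriv B z) := by
  rw [phi, deriv_id_mul hB]
  field_simp
  ring

lemma discr_id_mul {B : 𝕜 → 𝕜} (hB : Differentiable 𝕜 B) (hz : B z + z * deriv B z ≠ 0)
    (y : 𝕜) :
    discr (fun z => z * B z) z y = (z * (B z - z * deriv B z) / (B z + z * deriv B z) + y) ^ 2
      - 4 * y * B y * (z * B z / (B z + z * deriv B z) ^ 2) := by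
  rw [discr, phi_id_mul hB hz, xhat, deriv_id_mul hB]
  ring

end DiagonalDiscriminant

open DiagonalDiscriminant

/-- second diagonal derivatives of Q:
∂_Y² Q(Y,Y) = 2φ'(Y) and ∂_y∂_Y Q(Y,Y) = −2φ'(Y). -/
theorem stmt6 (B : ℂ → ℂ) (hB : ∀ z, AnalyticAt ℂ B z)
    (Q : ℂ → ℂ → ℂ)
    (hQ : ∀ Z y, Q Z y = (Z * (B Z - Z * deriv B Z) / (B Z + Z * deriv B Z) + y) ^ 2
      - 4 * y * B y * (Z * B Z / (B Z + Z * deriv B Z) ^ 2))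
    (Y : ℂ) (hden : B Y + Y * deriv B Y ≠ 0) :
    deriv (fun z => deriv (fun w => Q w Y) z) Y
        = 2 * deriv (fun Z => Z * (B Z - Z * deriv B Z) / (B Z + Z * deriv B Z)) Y ∧
    deriv (fun y => deriv (fun w => Q w y) Y) Y
        = -2 * deriv (fun Z => Z * (B Z - Z * deriv B Z) / (B Z + Z * deriv B Z)) Y := by
  set N : ℂ → ℂ := fun z => z * B z
  have hBd : Differentiable ℂ B := fun z => (hB z).differentiableAt
  have hNY : AnalyticAt ℂ N Y := analyticAt_id.mul (hB Y)
  have hDN : deriv N = fun z => B z + z * deriv B z := deriv_id_mul hBd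
  have hDY : deriv N Y ≠ 0 := by rwa [hDN]
  have hnear : ∀ᶠ Z in 𝓝 Y, B Z + Z * deriv B Z ≠ 0 := by
    simpa only [hDN] using hNY.deriv.continuousAt.eventually_ne hDY
  have hφ : (fun Z => Z * (B Z - Z * deriv B Z) / (B Z + Z * deriv B Z)) =ᶠ[𝓝 Y] phi N :=
    hnear.mono fun Z hZ => (phi_id_mul hBd hZ).symm
  have hQN : ∀ y, (fun w => Q w y) =ᶠ[𝓝 Y] fun w => discr N w y := fun y =>
    hnear.mono fun Z hZ => (hQ Z y).trans (discr_id_mul hBd hZ y).symm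
  rw [hφ.deriv_eq]
  constructor
  · rw [← deriv_deriv_discr_fst_diag hNY hDY]
    exact (hQN Y).deriv.deriv_eq
  · rw [← deriv_deriv_discr_snd_diag hNY.differentiableAt hNY.deriv.differentiableAt hDY]
    exact congrArg (deriv · Y) (funext fun y => (hQN y).deriv_eq)
end

section
/- Let B(Y) = Σ bₙ Yⁿ be a formal power series with b₀ ≠ 0, and set W(Y) = B(Y)·(1 + Y·B'(Y)/B(Y))² = (B(Y)+Y·B'(Y))²/B(Y). Then the coefficients of B are uniquely determined by those of W: b₀ = w₀ and for each n ≥ 1 there is a function f such that (1+2n)·bₙ = f(b₀,…,b_{n−1}; w₀,…,wₙ). In particular, the map W ↦ B is well defined on series with nonzero constant term. -/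
/-!
Since `W · B = (B + X B')²` and `[Xⁿ](B + X B') = (n + 1) bₙ`, comparing the `n`-th coefficients
of the two sides for two candidate series that agree below `n` leaves only the terms linear in
the difference `δ` of their `n`-th coefficients: `w₀ δ = b₀ δ` on the left and
`2 b₀ (n + 1) δ` on the right. Hence `(2n + 1) b₀ δ = 0`, and `δ = 0` in characteristic zero.
-/

open PowerSeries

namespace PowerSeries

section CommRing

variable {R : Type*} [CommRing R]

theorem coeff_add_X_mul_derivative (B : R⟦X⟧) (n : ℕ) :
    coeff n (B + X * d⁄dX R B) = (n + 1) * coeff n B := by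
  cases n with
  | zero => simp
  | succ m =>
    rw [map_add, coeff_succ_X_mul, coeff_derivative]
    push_cast
    ring

theorem coeff_mul_of_coeff_eq_zero_of_lt {f g : R⟦X⟧} {n : ℕ}
    (hg : ∀ m < n, coeff m g = 0) : coeff n (f * g) = constantCoeff f * coeff n g := by
  obtain ⟨h, rfl⟩ := X_pow_dvd_iff.mpr hg
  rw [mul_left_comm, coeff_X_pow_mul', coeff_X_pow_mul', if_pos le_rfl, if_pos le_rfl,
    Nat.sub_self, coeff_zero_eq_constantCoeff_apply, coeff_zero_eq_constantCoeff_apply, map_mul]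

theorem coeff_mul_sub_coeff_mul_of_coeff_eq {f₁ f₂ g₁ g₂ : R⟦X⟧} {n : ℕ}
    (hf : ∀ k < n, coeff k f₁ = coeff k f₂) (hg : ∀ k < n, coeff k g₁ = coeff k g₂) :
    coeff n (f₁ * g₁) - coeff n (f₂ * g₂) = constantCoeff f₁ * (coeff n g₁ - coeff n g₂) +
      constantCoeff g₂ * (coeff n f₁ - coeff n f₂) := by
  have hfg : f₁ * g₁ - f₂ * g₂ = f₁ * (g₁ - g₂) + g₂ * (f₁ - f₂) := by ring
  rw [← map_sub, hfg, map_add, coeff_mul_of_coeff_eq_zero_of_lt, coeff_mul_of_coeff_eq_zero_of_lt,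
    map_sub, map_sub] <;>
  simp_all

end CommRing

section Field

variable {K : Type*} [Field K]

theorem constantCoeff_add_X_mul_derivative_sq_mul_inv (B : K⟦X⟧) :
    constantCoeff ((B + X * d⁄dX K B) ^ 2 * B⁻¹) = constantCoeff B := by
  simp [constantCoeff_inv, sq, mul_self_mul_inv]

theorem coeff_eq_of_coeff_add_X_mul_derivative_sq_mul_inv_eq [CharZero K] {n : ℕ}
    (hn : 1 ≤ n) {B₁ B₂ : K⟦X⟧} (h₁ : constantCoeff B₁ ≠ 0)
    (hB : ∀ k < n, coeff k B₁ = coeff k B₂)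
    (hW : ∀ k ≤ n, coeff k ((B₁ + X * d⁄dX K B₁) ^ 2 * B₁⁻¹)
      = coeff k ((B₂ + X * d⁄dX K B₂) ^ 2 * B₂⁻¹)) :
    coeff n B₁ = coeff n B₂ := by
  set E₁ := B₁ + X * d⁄dX K B₁
  set E₂ := B₂ + X * d⁄dX K B₂
  set W₁ := E₁ ^ 2 * B₁⁻¹
  set W₂ := E₂ ^ 2 * B₂⁻¹
  set b₀ := constantCoeff B₁
  have h₂ : constantCoeff B₂ = b₀ := by simpa using (hB 0 hn).symm
  have hWB₁ : W₁ * B₁ = E₁ ^ 2 := by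
    simp [W₁, mul_assoc, PowerSeries.inv_mul_cancel _ h₁]
  have hWB₂ : W₂ * B₂ = E₂ ^ 2 := by
    simp [W₂, mul_assoc, PowerSeries.inv_mul_cancel _ (h₂ ▸ h₁)]
  have hE : ∀ k < n, coeff k E₁ = coeff k E₂ := fun k hk => by
    simp only [E₁, E₂, coeff_add_X_mul_derivative, hB k hk]
  have hEn : coeff n E₁ - coeff n E₂ = (n + 1) * (coeff n B₁ - coeff n B₂) := by
    simp only [E₁, E₂, coeff_add_X_mul_derivative]
    ring
  have hE₁ : constantCoeff E₁ = b₀ := by simp [E₁, b₀]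
  have hE₂ : constantCoeff E₂ = b₀ := by simp [E₂, h₂]
  have lhs : coeff n (W₁ * B₁) - coeff n (W₂ * B₂) = b₀ * (coeff n B₁ - coeff n B₂) := by
    rw [coeff_mul_sub_coeff_mul_of_coeff_eq (fun k hk => hW k hk.le) hB, hW n le_rfl,
      constantCoeff_add_X_mul_derivative_sq_mul_inv]
    ring
  have rhs : coeff n (E₁ ^ 2) - coeff n (E₂ ^ 2) =
      2 * b₀ * (n + 1) * (coeff n B₁ - coeff n B₂) := by
    rw [sq, sq, coeff_mul_sub_coeff_mul_of_coeff_eq hE hE, hEn, hE₁, hE₂]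
    ring
  have h2n : (2 * n + 1 : K) ≠ 0 := by exact_mod_cast (2 * n).succ_ne_zero
  have hδ : (2 * n + 1) * b₀ * (coeff n B₁ - coeff n B₂) = 0 := by
    linear_combination lhs - rhs - congrArg (coeff n) hWB₁ + congrArg (coeff n) hWB₂
  simpa [h2n, h₁, sub_eq_zero] using hδ

theorem eq_of_add_X_mul_derivative_sq_mul_inv_eq [CharZero K] {B₁ B₂ : K⟦X⟧}
    (h₁ : constantCoeff B₁ ≠ 0)
    (hW : (B₁ + X * d⁄dX K B₁) ^ 2 * B₁⁻¹ = (B₂ + X * d⁄dX K B₂) ^ 2 * B₂⁻¹) :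
    B₁ = B₂ := by
  ext n
  induction n using Nat.strong_induction_on with
  | _ n ih =>
    rcases n.eq_zero_or_pos with rfl | hn
    · simpa only [coeff_zero_eq_constantCoeff_apply,
        constantCoeff_add_X_mul_derivative_sq_mul_inv] using congrArg constantCoeff hW
    · exact coeff_eq_of_coeff_add_X_mul_derivative_sq_mul_inv_eq hn h₁ ih fun _ _ => by rw [hW]

end Field

end PowerSeries

/-- the coefficients of B are uniquely determined by those of
W = (B + X·B')²/B : b₀ = w₀, each bₙ is determined by b₀,…,b_{n−1} and w₀,…,wₙ,
and the map W ↦ B is well defined (injectivity). -/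
theorem stmt12 :
    (∀ B : PowerSeries ℂ, constantCoeff B ≠ 0 →
      constantCoeff ((B + X * derivativeFun B) ^ 2 * B⁻¹) = constantCoeff B) ∧
    (∀ n : ℕ, 1 ≤ n → ∀ B₁ B₂ : PowerSeries ℂ,
      constantCoeff B₁ ≠ 0 → constantCoeff B₂ ≠ 0 →
      (∀ k < n, coeff k B₁ = coeff k B₂) →
      (∀ k ≤ n, coeff k ((B₁ + X * derivativeFun B₁) ^ 2 * B₁⁻¹)
        = coeff k ((B₂ + X * derivativeFun B₂) ^ 2 * B₂⁻¹)) →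
      coeff n B₁ = coeff n B₂) ∧
    (∀ B₁ B₂ : PowerSeries ℂ, constantCoeff B₁ ≠ 0 → constantCoeff B₂ ≠ 0 →
      (B₁ + X * derivativeFun B₁) ^ 2 * B₁⁻¹ = (B₂ + X * derivativeFun B₂) ^ 2 * B₂⁻¹ →
      B₁ = B₂) :=
  ⟨fun B _ => constantCoeff_add_X_mul_derivative_sq_mul_inv B,
    fun _ hn _ _ h₁ _ => coeff_eq_of_coeff_add_X_mul_derivative_sq_mul_inv_eq hn h₁,
    fun _ _ h₁ _ => eq_of_add_X_mul_derivative_sq_mul_inv_eq h₁⟩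
end
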